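/- arXiv:1204.4694 — 3 statements merged into one kernel-verified Lean document; each statement's English description precedes it below -/
import Mathlib

section
/- Fix n ≥ 1 and a Hamiltonian H as in the context. Let a, τ : [0,∞)×ℝ → ℝ and z : [0,∞)×ℝ → D be C^∞ maps satisfying: (periodicity) a(s,t+n) = a(s,t), τ(s,t+n) = τ(s,t)+n, z(s,t+n) = z(s,t) for all (s,t); (Cauchy–Riemann part) ∂_s a = ∂_t τ and ∂_t a = −∂_s τ; (disk part) (∂_t a)·X_H(τ,z) + ∂_s z + i·(∂_t z − (∂_t τ)·X_H(τ,z)) = 0; (boundary) a(0,t) = c for all t, for some constant c ∈ ℝ. Assume furthermore that all first partial derivatives of a, τ, z are bounded on [0,∞)×ℝ. Then there exist constants a₀, τ₀ ∈ ℝ such that a(s,t) = s + a₀ and τ(s,t) = t + τ₀ for all (s,t) ∈ [0,∞)×ℝ, and z satisfies the Floer equation ∂_s z(s,t) + i·(∂_t z(s,t) − X_H(t+τ₀, z(s,t))) = 0 for all (s,t) ∈ [0,∞)×ℝ. -/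
open Complex Set

def Disk : Set ℂ := Metric.closedBall 0 1

/-- The Hamiltonian vector field `X_H(t,z) = (−∂_y H, ∂_x H)`, written in complex
notation as `i · (∂_x H + i ∂_y H)`. -/
noncomputable def XH (H : ℝ → ℂ → ℝ) (t : ℝ) (w : ℂ) : ℂ :=
  Complex.I * ((fderiv ℝ (H t) w 1 : ℝ) + (fderiv ℝ (H t) w Complex.I : ℝ) * Complex.I)

/-- Admissible Hamiltonians: smooth, 1-periodic in time, constant on the boundary circle. -/
structure IsAdmissible (H : ℝ → ℂ → ℝ) : Prop where
  smooth : ContDiff ℝ (⊤ : ℕ∞) (fun p : ℝ × ℂ => H p.1 p.2)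
  periodic : ∀ (t : ℝ) (z : ℂ), H (t + 1) z = H t z
  bdry_const : ∀ (t : ℝ), ∀ z w : ℂ, ‖z‖ = 1 → ‖w‖ = 1 → H t z = H t w

/-- The half cylinder `[0,∞) × ℝ`. -/
def HalfPlane : Set (ℝ × ℝ) := Set.Ici (0:ℝ) ×ˢ Set.univ

/-- Partial derivative in the `s`-direction, taken within a set `A`. -/
noncomputable def pds {E : Type*} [NormedAddCommGroup E] [NormedSpace ℝ E]
    (A : Set (ℝ × ℝ)) (f : ℝ × ℝ → E) (p : ℝ × ℝ) : E :=
  fderivWithin ℝ f A p (1, 0)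

/-- Partial derivative in the `t`-direction, taken within a set `A`. -/
noncomputable def pdt {E : Type*} [NormedAddCommGroup E] [NormedSpace ℝ E]
    (A : Set (ℝ × ℝ)) (f : ℝ × ℝ → E) (p : ℝ × ℝ) : E :=
  fderivWithin ℝ f A p (0, 1)

lemma mem_halfPlane_of {p : ℝ × ℝ} (h : 0 ≤ p.1) : p ∈ HalfPlane := ⟨h, trivial⟩

lemma halfPlane_uniqueDiffOn : UniqueDiffOn ℝ HalfPlane := by
  apply uniqueDiffOn_convex ((convex_Ici (0:ℝ)).prod convex_univ)
  rw [HalfPlane, interior_prod_eq, interior_Ici, interior_univ]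
  exact ⟨(1, 0), by norm_num, trivial⟩

lemma hasDerivAt_vert {E : Type*} [NormedAddCommGroup E] [NormedSpace ℝ E]
    {f : ℝ × ℝ → E} {s t : ℝ} (hs : 0 ≤ s)
    (hf : DifferentiableWithinAt ℝ f HalfPlane (s, t)) :
    HasDerivAt (fun u => f (s, u)) (pdt HalfPlane f (s, t)) t := by
  have hγ : HasDerivAt (fun u : ℝ => ((s, u) : ℝ × ℝ)) ((0 : ℝ), (1 : ℝ)) t :=
    (hasDerivAt_const _ _).prodMk (hasDerivAt_id _)
  have h := hf.hasFDerivWithinAt.comp_hasDerivWithinAt t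
      (hγ.hasDerivWithinAt (s := univ)) (fun u _ => mem_halfPlane_of hs)
  rw [hasDerivWithinAt_univ] at h
  exact h

lemma hasDerivWithinAt_horiz {E : Type*} [NormedAddCommGroup E] [NormedSpace ℝ E]
    {f : ℝ × ℝ → E} {s t : ℝ} (hs : 0 ≤ s)
    (hf : DifferentiableWithinAt ℝ f HalfPlane (s, t)) :
    HasDerivWithinAt (fun u => f (u, t)) (pds HalfPlane f (s, t)) (Ici 0) s := by
  have hγ : HasDerivAt (fun u : ℝ => ((u, t) : ℝ × ℝ)) ((1 : ℝ), (0 : ℝ)) s :=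
    (hasDerivAt_id _).prodMk (hasDerivAt_const _ _)
  exact hf.hasFDerivWithinAt.comp_hasDerivWithinAt s hγ.hasDerivWithinAt
    (fun u hu => mem_halfPlane_of hu)

lemma const_of_hasDerivWithinAt_zero {f : ℝ → ℝ}
    (hf : ∀ u ∈ Ici (0:ℝ), HasDerivWithinAt f 0 (Ici 0) u) {s : ℝ} (hs : 0 ≤ s) :
    f s = f 0 := by
  apply (convex_Ici (0:ℝ)).is_const_of_fderivWithin_eq_zero
    (fun u hu => (hf u hu).differentiableWithinAt) ?_ hs self_mem_Ici
  intro u hu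
  have h0 : HasFDerivWithinAt f (0 : ℝ →L[ℝ] ℝ) (Ici 0) u := by
    have h := (hf u hu).hasFDerivWithinAt
    convert h using 1
    all_goals try ext
    all_goals simp
  exact h0.fderivWithin (uniqueDiffOn_Ici 0 u hu)

/-- **Normal form for half cylinders with bounded gradient (Lemma: the Floer equation
from the Cauchy–Riemann equations).**  If `(a, τ, z)` solves the pseudoholomorphic
half-cylinder problem of period `n` with `a(0,·) ≡ c` and all first partial derivatives
bounded, then `a(s,t) = s + a₀`, `τ(s,t) = t + τ₀`, and `z` solves the Floer equation. -/
theorem normal_form_of_bounded_gradient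
    (H : ℝ → ℂ → ℝ) (hH : IsAdmissible H) (n : ℕ) (hn : 1 ≤ n)
    (a τ : ℝ × ℝ → ℝ) (z : ℝ × ℝ → ℂ) (c : ℝ)
    (ha_smooth : ContDiffOn ℝ (⊤ : ℕ∞) a HalfPlane)
    (hτ_smooth : ContDiffOn ℝ (⊤ : ℕ∞) τ HalfPlane)
    (hz_smooth : ContDiffOn ℝ (⊤ : ℕ∞) z HalfPlane)
    (hz_disk : ∀ p ∈ HalfPlane, z p ∈ Disk)
    (ha_per : ∀ s t : ℝ, 0 ≤ s → a (s, t + n) = a (s, t))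
    (hτ_per : ∀ s t : ℝ, 0 ≤ s → τ (s, t + n) = τ (s, t) + n)
    (hz_per : ∀ s t : ℝ, 0 ≤ s → z (s, t + n) = z (s, t))
    (hCR₁ : ∀ p ∈ HalfPlane, pds HalfPlane a p = pdt HalfPlane τ p)
    (hCR₂ : ∀ p ∈ HalfPlane, pdt HalfPlane a p = -pds HalfPlane τ p)
    (hdisk_eq : ∀ p ∈ HalfPlane,
      Complex.ofReal (pdt HalfPlane a p) * XH H (τ p) (z p) + pds HalfPlane z p +
        Complex.I * (pdt HalfPlane z p - Complex.ofReal (pdt HalfPlane τ p) * XH H (τ p) (z p)) = 0)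
    (hbdry : ∀ t : ℝ, a (0, t) = c)
    (hgrad : ∃ M : ℝ, ∀ p ∈ HalfPlane,
      |pds HalfPlane a p| ≤ M ∧ |pdt HalfPlane a p| ≤ M ∧
      |pds HalfPlane τ p| ≤ M ∧ |pdt HalfPlane τ p| ≤ M ∧
      ‖pds HalfPlane z p‖ ≤ M ∧ ‖pdt HalfPlane z p‖ ≤ M) :
    ∃ a₀ τ₀ : ℝ,
      (∀ p ∈ HalfPlane, a p = p.1 + a₀ ∧ τ p = p.2 + τ₀) ∧
      (∀ p ∈ HalfPlane,
        pds HalfPlane z p +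
          Complex.I * (pdt HalfPlane z p - XH H (p.2 + τ₀) (z p)) = 0) := by
  obtain ⟨M, hM⟩ := hgrad
  have hUD := halfPlane_uniqueDiffOn
  have haD : DifferentiableOn ℝ a HalfPlane := ha_smooth.differentiableOn (by simp)
  have hτD : DifferentiableOn ℝ τ HalfPlane := hτ_smooth.differentiableOn (by simp)
  -- boundary: ∂ₜ a = 0 on the boundary line
  have hB0 : ∀ x : ℝ, pdt HalfPlane a (0, x) = 0 := by
    intro x
    have h1 := hasDerivAt_vert le_rfl (haD (0, x) (mem_halfPlane_of le_rfl))
    have h2 : HasDerivAt (fun u : ℝ => a (0, u)) 0 x := by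
      have he : (fun u : ℝ => a (0, u)) = fun _ => c := funext fun u => hbdry u
      rw [he]; exact hasDerivAt_const _ _
    exact h1.unique h2
  -- the holomorphic map F = a + iτ
  have hF : ∀ w : ℂ, 0 ≤ w.re → HasDerivWithinAt
      (fun w : ℂ => (a (w.re, w.im) : ℂ) + (τ (w.re, w.im) : ℝ) • (I : ℂ))
      (((pds HalfPlane a (w.re, w.im) : ℝ) : ℂ) - ((pdt HalfPlane a (w.re, w.im) : ℝ) : ℂ) * I)
      {w : ℂ | 0 ≤ w.re} w := by
    intro w hw
    have hp : ((w.re, w.im) : ℝ × ℝ) ∈ HalfPlane := mem_halfPlane_of hw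
    have ha' : HasFDerivWithinAt a (fderivWithin ℝ a HalfPlane (w.re, w.im))
        HalfPlane (w.re, w.im) := (haD _ hp).hasFDerivWithinAt
    have hτ' : HasFDerivWithinAt τ (fderivWithin ℝ τ HalfPlane (w.re, w.im))
        HalfPlane (w.re, w.im) := (hτD _ hp).hasFDerivWithinAt
    have h1 : HasFDerivWithinAt (fun q : ℝ × ℝ => (a q : ℂ))
        (Complex.ofRealCLM.comp (fderivWithin ℝ a HalfPlane (w.re, w.im)))
        HalfPlane (w.re, w.im) :=
      Complex.ofRealCLM.hasFDerivAt.comp_hasFDerivWithinAt _ ha'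
    have h2 : HasFDerivWithinAt (fun q : ℝ × ℝ => (τ q : ℝ) • (I : ℂ))
        ((fderivWithin ℝ τ HalfPlane (w.re, w.im)).smulRight I)
        HalfPlane (w.re, w.im) := hτ'.smul_const I
    have hFp := h1.add h2
    have he : HasFDerivWithinAt (fun w : ℂ => (w.re, w.im))
        (Complex.equivRealProdCLM.toContinuousLinearMap) {w : ℂ | 0 ≤ w.re} w :=
      Complex.equivRealProdCLM.toContinuousLinearMap.hasFDerivAt.hasFDerivWithinAt
    have hcomp := hFp.comp w he (fun v hv => mem_halfPlane_of hv)
    rw [hasDerivWithinAt_iff_hasFDerivWithinAt]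
    refine HasFDerivWithinAt.of_restrictScalars (𝕜 := ℝ) hcomp ?_
    apply ContinuousLinearMap.ext
    intro v
    have hsplit : ∀ L : ℝ × ℝ →L[ℝ] ℝ,
        L (v.re, v.im) = v.re * L (1, 0) + v.im * L (0, 1) := by
      intro L
      have hv : ((v.re, v.im) : ℝ × ℝ)
          = v.re • ((1:ℝ), (0:ℝ)) + v.im • ((0:ℝ), (1:ℝ)) := by
        simp [Prod.ext_iff]
      rw [hv, map_add, map_smul, map_smul, smul_eq_mul, smul_eq_mul]
    have hτ10 : (fderivWithin ℝ τ HalfPlane (w.re, w.im)) (1, 0)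
        = -pdt HalfPlane a (w.re, w.im) := by
      have h := hCR₂ _ hp
      rw [h, neg_neg]; rfl
    have hτ01 : (fderivWithin ℝ τ HalfPlane (w.re, w.im)) (0, 1)
        = pds HalfPlane a (w.re, w.im) := by
      have h := (hCR₁ _ hp).symm
      rw [← h]; rfl
    simp only [ContinuousLinearMap.coe_restrictScalars', ContinuousLinearMap.smulRight_apply,
      ContinuousLinearMap.one_apply, ContinuousLinearMap.coe_comp', Function.comp_apply,
      ContinuousLinearMap.add_apply, Complex.ofRealCLM_apply,
      ContinuousLinearEquiv.coe_coe, Complex.equivRealProdCLM_apply, smul_eq_mul]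
    rw [hsplit, hsplit, hτ10, hτ01]
    have hXY : (fderivWithin ℝ a HalfPlane (w.re, w.im)) (1, 0)
        = pds HalfPlane a (w.re, w.im) := rfl
    have hXY2 : (fderivWithin ℝ a HalfPlane (w.re, w.im)) (0, 1)
        = pdt HalfPlane a (w.re, w.im) := rfl
    rw [hXY, hXY2]
    simp only [Complex.real_smul]
    push_cast
    refine Complex.ext ?_ ?_ <;>
      simp [Complex.add_re, Complex.add_im, Complex.mul_re, Complex.mul_im, Complex.sub_re,
        Complex.sub_im, Complex.I_re, Complex.I_im, Complex.ofReal_re, Complex.ofReal_im] <;>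
      ring
  -- notation
  set F : ℂ → ℂ := fun w : ℂ => (a (w.re, w.im) : ℂ) + (τ (w.re, w.im) : ℝ) • (I : ℂ) with hFdef
  set h : ℂ → ℂ := fun w : ℂ =>
    (((pds HalfPlane a (w.re, w.im) : ℝ) : ℂ) - 1)
      - ((pdt HalfPlane a (w.re, w.im) : ℝ) : ℂ) * I with hhdef
  have hΩo_open : IsOpen {w : ℂ | 0 < w.re} := isOpen_lt continuous_const Complex.continuous_re
  have hΩ_closed : IsClosed {w : ℂ | 0 ≤ w.re} := isClosed_le continuous_const Complex.continuous_re
  have hsub : {w : ℂ | 0 < w.re} ⊆ {w : ℂ | 0 ≤ w.re} := fun w hw => show (0:ℝ) ≤ w.re from le_of_lt hw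
  have hh_im : ∀ w : ℂ, (I * h w).re = pdt HalfPlane a (w.re, w.im) := by
    intro w
    simp [hhdef, Complex.mul_re, Complex.mul_im]
  -- differentiability of h on the open half-plane
  have hderiv : ∀ w ∈ {w : ℂ | 0 < w.re}, HasDerivAt F (h w + 1) w := by
    intro w hw
    have h1 := (hF w (le_of_lt hw)).hasDerivAt
      (Filter.mem_of_superset (hΩo_open.mem_nhds hw) hsub)
    have : h w + 1 = ((pds HalfPlane a (w.re, w.im) : ℝ) : ℂ)
        - ((pdt HalfPlane a (w.re, w.im) : ℝ) : ℂ) * I := by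
      rw [hhdef]; ring
    rw [this]
    exact h1
  have hFdiff : DifferentiableOn ℂ F {w : ℂ | 0 < w.re} :=
    fun w hw => ((hderiv w hw).differentiableAt).differentiableWithinAt
  have hFan : AnalyticOnNhd ℂ F {w : ℂ | 0 < w.re} := hFdiff.analyticOnNhd hΩo_open
  have hdF : DifferentiableOn ℂ (deriv F) {w : ℂ | 0 < w.re} :=
    fun w hw => ((hFan.deriv w hw).differentiableAt).differentiableWithinAt
  have hh_eq : ∀ w ∈ {w : ℂ | 0 < w.re}, h w = deriv F w - 1 := by
    intro w hw
    rw [(hderiv w hw).deriv]; ring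
  have hh_diff : DifferentiableOn ℂ h {w : ℂ | 0 < w.re} :=
    (hdF.sub (differentiableOn_const 1)).congr hh_eq
  -- continuity of h on the closed half-plane
  have hacont : ContinuousOn (fun p : ℝ × ℝ => pds HalfPlane a p) HalfPlane := by
    have h1 := ha_smooth.continuousOn_fderivWithin hUD (by simp)
    exact h1.clm_apply continuousOn_const
  have hbcont : ContinuousOn (fun p : ℝ × ℝ => pdt HalfPlane a p) HalfPlane := by
    have h1 := ha_smooth.continuousOn_fderivWithin hUD (by simp)
    exact h1.clm_apply continuousOn_const
  have hecont : Continuous (fun w : ℂ => (w.re, w.im)) :=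
    Complex.continuous_re.prodMk Complex.continuous_im
  have hmapsΩ : MapsTo (fun w : ℂ => (w.re, w.im)) {w : ℂ | 0 ≤ w.re} HalfPlane :=
    fun w hw => mem_halfPlane_of hw
  have hhcont : ContinuousOn h {w : ℂ | 0 ≤ w.re} := by
    rw [hhdef]
    apply ContinuousOn.sub
    · apply ContinuousOn.sub
      · exact Complex.continuous_ofReal.comp_continuousOn
          (hacont.comp hecont.continuousOn hmapsΩ)
      · exact continuousOn_const
    · exact (Complex.continuous_ofReal.comp_continuousOn
        (hbcont.comp hecont.continuousOn hmapsΩ)).mul continuousOn_const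
  -- Phragmén–Lindelöf
  have hM0 : 0 ≤ M := le_trans (abs_nonneg _) (hM (0, 0) (mem_halfPlane_of le_rfl)).1
  have hPL : ∀ d : ℝ, |d| ≤ 1 → ∀ w : ℂ, 0 ≤ w.re →
      d * pdt HalfPlane a (w.re, w.im) ≤ 0 := by
    intro d hd1
    have hnorm : ∀ w : ℂ, ‖Complex.exp ((d : ℂ) * I * h w)‖
        = Real.exp (d * pdt HalfPlane a (w.re, w.im)) := by
      intro w
      rw [Complex.norm_exp]
      congr 1
      rw [hhdef]
      simp only [Complex.mul_re, Complex.mul_im, Complex.ofReal_re, Complex.ofReal_im,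
        Complex.I_re, Complex.I_im, Complex.sub_re, Complex.sub_im, Complex.one_re,
        Complex.one_im]
      ring
    suffices hle : ∀ w : ℂ, 0 ≤ w.re → ‖Complex.exp ((d : ℂ) * I * h w)‖ ≤ 1 by
      intro w hw
      have h1 := hle w hw
      rw [hnorm w] at h1
      exact Real.exp_le_one_iff.mp h1
    intro w hw
    apply PhragmenLindelof.right_half_plane_of_bounded_on_real (f := fun w => Complex.exp ((d : ℂ) * I * h w)) ?_ ?_ ?_ ?_ hw
    · -- DiffContOnCl
      refine ⟨(hh_diff.const_mul ((d : ℂ) * I)).cexp, ?_⟩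
      have hcl : closure {w : ℂ | 0 < w.re} ⊆ {w : ℂ | 0 ≤ w.re} :=
        closure_minimal hsub hΩ_closed
      exact ((continuousOn_const.mul hhcont).cexp).mono hcl
    · -- growth condition
      refine ⟨1, one_lt_two, 0, ?_⟩
      rw [Asymptotics.isBigO_iff]
      refine ⟨Real.exp (M + 1), ?_⟩
      rw [Filter.eventually_inf_principal]
      apply Filter.Eventually.of_forall
      intro v hv
      have hpv : ((v.re, v.im) : ℝ × ℝ) ∈ HalfPlane := mem_halfPlane_of (le_of_lt hv)
      rw [hnorm v]
      have hb : d * pdt HalfPlane a (v.re, v.im) ≤ M + 1 := by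
        have h2 := (hM _ hpv).2.1
        have h3 : d * pdt HalfPlane a (v.re, v.im) ≤ |d| * |pdt HalfPlane a (v.re, v.im)| := by
          calc d * pdt HalfPlane a (v.re, v.im) ≤ |d * pdt HalfPlane a (v.re, v.im)| := le_abs_self _
          _ = |d| * |pdt HalfPlane a (v.re, v.im)| := abs_mul _ _
        nlinarith [abs_nonneg d, abs_nonneg (pdt HalfPlane a (v.re, v.im))]
      calc Real.exp (d * pdt HalfPlane a (v.re, v.im))
          ≤ Real.exp (M + 1) := Real.exp_le_exp.mpr hb
        _ = Real.exp (M + 1) * ‖Real.exp (0 * ‖v‖ ^ (1:ℝ))‖ := by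
            rw [zero_mul, Real.exp_zero]; simp
    · -- bounded on the real axis
      apply Filter.isBoundedUnder_of_eventually_le (a := Real.exp (M + 1))
      filter_upwards [Filter.eventually_ge_atTop (0:ℝ)] with x hx
      have hre : ((x : ℂ)).re = x := Complex.ofReal_re x
      have him : ((x : ℂ)).im = 0 := Complex.ofReal_im x
      rw [hnorm]
      rw [hre, him]
      have hpv : ((x, 0) : ℝ × ℝ) ∈ HalfPlane := mem_halfPlane_of hx
      have h2 := (hM _ hpv).2.1
      have h3 : d * pdt HalfPlane a (x, 0) ≤ M + 1 := by
        have h4 : d * pdt HalfPlane a (x, 0) ≤ |d| * |pdt HalfPlane a (x, 0)| := by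
          calc d * pdt HalfPlane a (x, 0) ≤ |d * pdt HalfPlane a (x, 0)| := le_abs_self _
          _ = |d| * |pdt HalfPlane a (x, 0)| := abs_mul _ _
        nlinarith [abs_nonneg d, abs_nonneg (pdt HalfPlane a (x, 0))]
      exact Real.exp_le_exp.mpr h3
    · -- boundary bound
      intro x
      rw [hnorm]
      have h1 : ((x : ℂ) * I).re = 0 := by simp
      have h2 : ((x : ℂ) * I).im = x := by simp
      rw [h1, h2, hB0 x, mul_zero, Real.exp_zero]
  -- consequences: ∂ₜ a ≡ 0 and ∂ₛ τ ≡ 0 on the half-plane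
  have hB : ∀ p ∈ HalfPlane, pdt HalfPlane a p = 0 := by
    intro p hp
    have hp1 : (0:ℝ) ≤ p.1 := hp.1
    set w : ℂ := ⟨p.1, p.2⟩ with hwdef
    have hwre : w.re = p.1 := rfl
    have hwim : w.im = p.2 := rfl
    have h1 := hPL 1 (by norm_num) w (by rw [hwre]; exact hp1)
    have h2 := hPL (-1) (by norm_num) w (by rw [hwre]; exact hp1)
    rw [hwre, hwim] at h1 h2
    have : pdt HalfPlane a (p.1, p.2) = 0 := by linarith
    simpa using this
  have hSτ : ∀ p ∈ HalfPlane, pds HalfPlane τ p = 0 := by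
    intro p hp
    have h1 := hCR₂ p hp
    rw [hB p hp] at h1
    linarith
  -- a is independent of t
  have ha_vert : ∀ s t : ℝ, 0 ≤ s → a (s, t) = a (s, 0) := by
    intro s t hs
    have hd : ∀ u : ℝ, HasDerivAt (fun u => a (s, u)) 0 u := by
      intro u
      have h1 := hasDerivAt_vert hs (haD (s, u) (mem_halfPlane_of hs))
      rwa [hB (s, u) (mem_halfPlane_of hs)] at h1
    exact is_const_of_deriv_eq_zero (fun u => (hd u).differentiableAt)
      (fun u => (hd u).deriv) t 0
  -- pds a is independent of t
  have hA_vert : ∀ s t : ℝ, 0 ≤ s → pds HalfPlane a (s, t) = pds HalfPlane a (s, 0) := by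
    intro s t hs
    have hπmaps : MapsTo (fun q : ℝ × ℝ => ((q.1, (0:ℝ)) : ℝ × ℝ)) HalfPlane HalfPlane :=
      fun q hq => mem_halfPlane_of hq.1
    have hπL : HasFDerivWithinAt (fun q : ℝ × ℝ => ((q.1, (0:ℝ)) : ℝ × ℝ))
        ((ContinuousLinearMap.fst ℝ ℝ ℝ).prod 0) HalfPlane (s, t) :=
      (hasFDerivAt_fst.prodMk (hasFDerivAt_const (0:ℝ) _)).hasFDerivWithinAt
    have h1 : HasFDerivWithinAt a (fderivWithin ℝ a HalfPlane (s, 0)) HalfPlane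
        ((fun q : ℝ × ℝ => ((q.1, (0:ℝ)) : ℝ × ℝ)) (s, t)) :=
      (haD (s, 0) (mem_halfPlane_of hs)).hasFDerivWithinAt
    have hcomp := h1.comp (s, t) hπL hπmaps
    have heq : HasFDerivWithinAt a
        ((fderivWithin ℝ a HalfPlane (s, 0)).comp ((ContinuousLinearMap.fst ℝ ℝ ℝ).prod 0))
        HalfPlane (s, t) := by
      apply hcomp.congr
      · intro q hq
        exact ha_vert q.1 q.2 hq.1
      · exact ha_vert s t hs
    have hfd := heq.fderivWithin (hUD (s, t) (mem_halfPlane_of hs))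
    calc pds HalfPlane a (s, t) = (fderivWithin ℝ a HalfPlane (s, t)) (1, 0) := rfl
      _ = ((fderivWithin ℝ a HalfPlane (s, 0)).comp
            ((ContinuousLinearMap.fst ℝ ℝ ℝ).prod 0)) (1, 0) := by rw [hfd]
      _ = pds HalfPlane a (s, 0) := rfl
  -- pds a ≡ 1, via the periodicity of τ
  have hA1 : ∀ s t : ℝ, 0 ≤ s → pds HalfPlane a (s, t) = 1 := by
    intro s t hs
    rw [hA_vert s t hs]
    have hφ : ∀ u : ℝ, HasDerivAt
        (fun u => τ (s, u) - pds HalfPlane a (s, 0) * u) 0 u := by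
      intro u
      have h1 := hasDerivAt_vert hs (hτD (s, u) (mem_halfPlane_of hs))
      have h2 : pdt HalfPlane τ (s, u) = pds HalfPlane a (s, 0) := by
        rw [← hCR₁ (s, u) (mem_halfPlane_of hs)]
        exact hA_vert s u hs
      have h3 : HasDerivAt (fun u : ℝ => pds HalfPlane a (s, 0) * u)
          (pds HalfPlane a (s, 0)) u := by
        simpa using (hasDerivAt_id u).const_mul (pds HalfPlane a (s, 0))
      have h4 := h1.sub h3
      rw [h2] at h4
      rw [sub_self] at h4; exact h4
    have hconst := is_const_of_deriv_eq_zero (fun u => (hφ u).differentiableAt)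
      (fun u => (hφ u).deriv) (n : ℝ) 0
    have hper := hτ_per s 0 hs
    rw [zero_add] at hper
    have hn' : (n : ℝ) ≠ 0 := by
      have : (0:ℝ) < n := by exact_mod_cast lt_of_lt_of_le zero_lt_one hn
      linarith
    simp only [mul_zero, sub_zero] at hconst
    have hAn : pds HalfPlane a (s, 0) * n = 1 * n := by
      rw [one_mul]; linarith
    exact mul_right_cancel₀ hn' hAn
  -- a(s,t) = s + c
  have ha_fin : ∀ s t : ℝ, 0 ≤ s → a (s, t) = s + c := by
    intro s t hs
    rw [ha_vert s t hs]
    have hψ : ∀ u ∈ Ici (0:ℝ), HasDerivWithinAt (fun u => a (u, 0) - u) 0 (Ici 0) u := by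
      intro u hu
      have h1 := hasDerivWithinAt_horiz hu (haD (u, 0) (mem_halfPlane_of hu))
      have h2 := (hasDerivAt_id u).hasDerivWithinAt (s := Ici 0)
      have h3 := h1.sub h2
      rw [hA1 u 0 hu] at h3
      rw [sub_self] at h3; exact h3
    have hc := const_of_hasDerivWithinAt_zero hψ hs
    have h00 : a (0, 0) = c := hbdry 0
    linarith
  -- τ(s,t) = t + τ(0,0)
  have hτ_horiz : ∀ s t : ℝ, 0 ≤ s → τ (s, t) = τ (0, t) := by
    intro s t hs
    have hψ : ∀ u ∈ Ici (0:ℝ), HasDerivWithinAt (fun u => τ (u, t)) 0 (Ici 0) u := by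
      intro u hu
      have h1 := hasDerivWithinAt_horiz hu (hτD (u, t) (mem_halfPlane_of hu))
      rwa [hSτ (u, t) (mem_halfPlane_of hu)] at h1
    exact const_of_hasDerivWithinAt_zero hψ hs
  have hτ_fin : ∀ s t : ℝ, 0 ≤ s → τ (s, t) = t + τ (0, 0) := by
    intro s t hs
    rw [hτ_horiz s t hs]
    have hφ : ∀ u : ℝ, HasDerivAt (fun u => τ (0, u) - u) 0 u := by
      intro u
      have h1 := hasDerivAt_vert le_rfl (hτD (0, u) (mem_halfPlane_of le_rfl))
      have h2 : pdt HalfPlane τ (0, u) = 1 := by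
        rw [← hCR₁ (0, u) (mem_halfPlane_of le_rfl)]
        exact hA1 0 u le_rfl
      have h3 := h1.sub (hasDerivAt_id u)
      rw [h2] at h3
      rw [sub_self] at h3; exact h3
    have hconst := is_const_of_deriv_eq_zero (fun u => (hφ u).differentiableAt)
      (fun u => (hφ u).deriv) t 0
    linarith
  -- conclusion
  refine ⟨c, τ (0, 0), fun p hp => ⟨?_, ?_⟩, fun p hp => ?_⟩
  · exact ha_fin p.1 p.2 hp.1
  · exact hτ_fin p.1 p.2 hp.1
  · have hd := hdisk_eq p hp
    have h1 : pdt HalfPlane a p = 0 := hB p hp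
    have h2 : pdt HalfPlane τ p = 1 := by
      rw [← hCR₁ p hp]
      exact hA1 p.1 p.2 hp.1
    have h3 : τ p = p.2 + τ (0, 0) := hτ_fin p.1 p.2 hp.1
    rw [h1, h2, h3] at hd
    simpa using hd
end

section
/- Let φ : D → D be a C^∞ diffeomorphism of the closed unit disk (smooth with smooth inverse up to the boundary) with φ(0) = 0, and let π : (0,1]×S¹ → D ∖ {0} be the C^∞ diffeomorphism π(t,x) := √t·x. Then: (i) if φ preserves the area form dx∧dy on D, the conjugated map π⁻¹ ∘ φ|_{D∖{0}} ∘ π of the half-open annulus (0,1]×S¹ preserves the product measure dt⊗dθ; and (ii) π⁻¹ ∘ φ ∘ π, which is given explicitly by (t,x) ↦ (|φ(√t·x)|², φ(√t·x)/|φ(√t·x)|) for t > 0, extends to a homeomorphism φ̂ of the closed annulus [0,1]×S¹ whose value on the inner boundary is φ̂(0,x) = (0, Dφ(0)[x]/|Dφ(0)[x]|). -/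
open Complex Metric Set MeasureTheory

/-- A `C^∞`-smooth diffeomorphism of the closed unit disk: a bijection of `Disk`
which is `C^∞` up to the boundary together with its inverse. -/
structure SmoothDiskDiffeo where
  toFun : ℂ → ℂ
  invFun : ℂ → ℂ
  mapsTo : Set.MapsTo toFun Disk Disk
  mapsTo_inv : Set.MapsTo invFun Disk Disk
  left_inv : ∀ z ∈ Disk, invFun (toFun z) = z
  right_inv : ∀ z ∈ Disk, toFun (invFun z) = z
  smooth : ContDiffOn ℝ (⊤ : ℕ∞) toFun Disk
  smooth_inv : ContDiffOn ℝ (⊤ : ℕ∞) invFun Disk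

instance : Fact (0 < 2 * Real.pi) := ⟨by positivity⟩

/-- Lebesgue (Haar) measure `dθ` on the circle of angles `ℝ/2πℤ`. -/
noncomputable instance : MeasureSpace Real.Angle := by unfold Real.Angle; infer_instance

/-- The point on the unit circle with angle `θ`. -/
noncomputable def emap (θ : Real.Angle) : ℂ := (θ.cos : ℂ) + (θ.sin : ℂ) * Complex.I

/-- The coordinate map `π(t, x) = √t · x` from the annulus `(0,1] × S¹` onto `D ∖ {0}`. -/
noncomputable def piMap (p : ℝ × Real.Angle) : ℂ := (Real.sqrt p.1 : ℂ) * emap p.2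

/-- The conjugated map `π⁻¹ ∘ φ ∘ π`, given explicitly by
`(t, x) ↦ (|φ(√t·x)|², φ(√t·x)/|φ(√t·x)|)` in the coordinates `(t, angle)`. -/
noncomputable def hatMap (φ : ℂ → ℂ) (p : ℝ × Real.Angle) : ℝ × Real.Angle :=
  (Complex.normSq (φ (piMap p)), (Complex.arg (φ (piMap p)) : Real.Angle))

/-- The half-open annulus `(0,1] × S¹`. -/
def Ann : Set (ℝ × Real.Angle) := Set.Ioc (0:ℝ) 1 ×ˢ Set.univ

/-- The closed annulus `[0,1] × S¹`. -/
def AnnCl : Set (ℝ × Real.Angle) := Set.Icc (0:ℝ) 1 ×ˢ Set.univ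

namespace Blowup

instance : PolishSpace Real.Angle := inferInstanceAs (PolishSpace (AddCircle (2*Real.pi)))
instance : BorelSpace Real.Angle := inferInstanceAs (BorelSpace (AddCircle (2*Real.pi)))

lemma zero_mem_disk : (0:ℂ) ∈ Disk := by simp [Disk]

lemma disk_mem_nhds : Disk ∈ nhds (0:ℂ) :=
  Filter.mem_of_superset (Metric.ball_mem_nhds 0 one_pos) Metric.ball_subset_closedBall

lemma convex_disk : Convex ℝ Disk := convex_closedBall _ _

lemma uniqueDiffOn_disk : UniqueDiffOn ℝ Disk :=
  uniqueDiffOn_convex convex_disk (by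
    show (interior (Metric.closedBall (0:ℂ) 1)).Nonempty
    rw [interior_closedBall (0:ℂ) one_ne_zero]
    exact ⟨0, by simp⟩)

lemma ann_subset : Ann ⊆ AnnCl := fun p hp => ⟨Set.Ioc_subset_Icc_self hp.1, trivial⟩

lemma mem_ann_iff {p : ℝ × Real.Angle} : p ∈ Ann ↔ 0 < p.1 ∧ p.1 ≤ 1 :=
  ⟨fun h => ⟨h.1.1, h.1.2⟩, fun h => ⟨⟨h.1, h.2⟩, trivial⟩⟩

lemma mem_annCl_iff {p : ℝ × Real.Angle} : p ∈ AnnCl ↔ 0 ≤ p.1 ∧ p.1 ≤ 1 :=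
  ⟨fun h => ⟨h.1.1, h.1.2⟩, fun h => ⟨⟨h.1, h.2⟩, trivial⟩⟩

lemma emap_coe (r : ℝ) : emap (r : Real.Angle) = Complex.cos r + Complex.sin r * Complex.I := by
  simp [emap, Real.Angle.cos_coe, Real.Angle.sin_coe, Complex.ofReal_cos, Complex.ofReal_sin]

lemma normSq_emap (θ : Real.Angle) : Complex.normSq (emap θ) = 1 := by
  simp [emap, Complex.normSq_apply]
  have := θ.cos_sq_add_sin_sq
  nlinarith [this]

lemma abs_emap (θ : Real.Angle) : ‖emap θ‖ = 1 := by
  rw [Complex.norm_def, normSq_emap, Real.sqrt_one]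

lemma emap_ne_zero (θ : Real.Angle) : emap θ ≠ 0 := by
  intro h
  have := normSq_emap θ
  rw [h] at this
  simp at this

lemma continuous_emap : Continuous emap :=
  (Complex.continuous_ofReal.comp Real.Angle.continuous_cos).add
    ((Complex.continuous_ofReal.comp Real.Angle.continuous_sin).mul continuous_const)

lemma arg_emap (θ : Real.Angle) : ((emap θ).arg : Real.Angle) = θ :=
  Complex.arg_cos_add_sin_mul_I_coe_angle θ

lemma emap_arg (w : ℂ) : (‖w‖ : ℂ) * emap (w.arg : Real.Angle) = w := by
  rw [emap_coe]
  exact Complex.norm_mul_cos_add_sin_mul_I w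

lemma continuous_piMap : Continuous piMap :=
  (Complex.continuous_ofReal.comp (Real.continuous_sqrt.comp continuous_fst)).mul
    (continuous_emap.comp continuous_snd)

lemma abs_piMap {p : ℝ × Real.Angle} : ‖piMap p‖ = Real.sqrt p.1 := by
  rw [piMap, norm_mul, abs_emap, mul_one, Complex.norm_real, Real.norm_eq_abs, _root_.abs_of_nonneg (Real.sqrt_nonneg _)]

lemma normSq_piMap {p : ℝ × Real.Angle} (h : 0 ≤ p.1) : Complex.normSq (piMap p) = p.1 := by
  rw [Complex.normSq_eq_norm_sq, abs_piMap, Real.sq_sqrt h]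

lemma piMap_mem_disk {p : ℝ × Real.Angle} (hp : p ∈ AnnCl) : piMap p ∈ Disk := by
  rw [Disk, Metric.mem_closedBall, dist_zero_right, abs_piMap]
  exact Real.sqrt_le_one.mpr (mem_annCl_iff.mp hp).2

lemma piMap_ne_zero {p : ℝ × Real.Angle} (hp : p ∈ Ann) : piMap p ≠ 0 := by
  intro h
  have := abs_piMap (p := p)
  rw [h, norm_zero] at this
  have h1 : (0:ℝ) < Real.sqrt p.1 := Real.sqrt_pos.mpr (mem_ann_iff.mp hp).1
  linarith [this]

lemma piMap_polar (w : ℂ) : piMap (Complex.normSq w, (w.arg : Real.Angle)) = w := by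
  rw [piMap]
  simp only
  rw [← Complex.norm_def]
  exact emap_arg w

lemma arg_piMap {p : ℝ × Real.Angle} (hp : p ∈ Ann) : ((piMap p).arg : Real.Angle) = p.2 := by
  rw [piMap, Complex.arg_real_mul _ (Real.sqrt_pos.mpr (mem_ann_iff.mp hp).1)]
  exact arg_emap p.2

lemma injOn_piMap : Set.InjOn piMap Ann := by
  intro p hp q hq h
  have h1 : p.1 = q.1 := by
    have := normSq_piMap (p := p) (le_of_lt (mem_ann_iff.mp hp).1)
    rw [h, normSq_piMap (le_of_lt (mem_ann_iff.mp hq).1)] at this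
    exact this.symm
  have h2 : p.2 = q.2 := by
    rw [← arg_piMap hp, ← arg_piMap hq, h]
  exact Prod.ext h1 h2

end Blowup
namespace Blowup

def _root_.SmoothDiskDiffeo.symm (φ : SmoothDiskDiffeo) : SmoothDiskDiffeo :=
  ⟨φ.invFun, φ.toFun, φ.mapsTo_inv, φ.mapsTo, φ.right_inv, φ.left_inv, φ.smooth_inv, φ.smooth⟩

variable (φ : SmoothDiskDiffeo)

lemma symm_fix (hfix : φ.toFun 0 = 0) : φ.invFun 0 = 0 := by
  conv_lhs => rw [← hfix]
  exact φ.left_inv 0 zero_mem_disk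

lemma injOn_toFun : Set.InjOn φ.toFun Disk := fun x hx y hy h => by
  rw [← φ.left_inv x hx, ← φ.left_inv y hy, h]

lemma toFun_ne_zero (hfix : φ.toFun 0 = 0) {z : ℂ} (hz : z ∈ Disk) (h0 : z ≠ 0) :
    φ.toFun z ≠ 0 := fun h => h0 (injOn_toFun φ hz zero_mem_disk (h.trans hfix.symm))

lemma differentiableAt_zero : DifferentiableAt ℝ φ.toFun 0 :=
  ((φ.smooth.contDiffAt disk_mem_nhds).differentiableAt (by simp))

lemma hasFDerivAt_zero : HasFDerivAt φ.toFun (fderiv ℝ φ.toFun 0) 0 :=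
  (differentiableAt_zero φ).hasFDerivAt

lemma fderiv_inv_comp (hfix : φ.toFun 0 = 0) (z : ℂ) :
    fderiv ℝ φ.invFun 0 (fderiv ℝ φ.toFun 0 z) = z := by
  have hA := hasFDerivAt_zero φ
  have hB := hasFDerivAt_zero φ.symm
  -- hB is at 0 = φ.toFun 0
  have hB' : HasFDerivAt φ.invFun (fderiv ℝ φ.invFun 0) (φ.toFun 0) := by
    rw [hfix]; exact hB
  have hC : HasFDerivAt (φ.invFun ∘ φ.toFun) ((fderiv ℝ φ.invFun 0).comp (fderiv ℝ φ.toFun 0)) 0 :=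
    hB'.comp 0 hA
  have heq : φ.invFun ∘ φ.toFun =ᶠ[nhds 0] id := by
    filter_upwards [disk_mem_nhds] with w hw
    exact φ.left_inv w hw
  have hC' : HasFDerivAt id ((fderiv ℝ φ.invFun 0).comp (fderiv ℝ φ.toFun 0)) (0:ℂ) :=
    hC.congr_of_eventuallyEq heq.symm
  have := hC'.unique (hasFDerivAt_id 0)
  calc fderiv ℝ φ.invFun 0 (fderiv ℝ φ.toFun 0 z)
      = ((fderiv ℝ φ.invFun 0).comp (fderiv ℝ φ.toFun 0)) z := rfl
    _ = z := by rw [this]; rfl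

lemma fderiv_zero_ne_zero (hfix : φ.toFun 0 = 0) {x : ℂ} (hx : x ≠ 0) :
    fderiv ℝ φ.toFun 0 x ≠ 0 := by
  intro h
  have := fderiv_inv_comp φ hfix x
  rw [h, map_zero] at this
  exact hx this.symm

lemma fderivWithin_eq_fderiv_zero : fderivWithin ℝ φ.toFun Disk 0 = fderiv ℝ φ.toFun 0 :=
  fderivWithin_of_mem_nhds disk_mem_nhds

lemma taylor (hfix : φ.toFun 0 = 0) {ε : ℝ} (hε : 0 < ε) :
    ∃ δ > 0, ∀ z ∈ Disk, ‖z‖ < δ → ‖φ.toFun z - fderiv ℝ φ.toFun 0 z‖ ≤ ε * ‖z‖ := by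
  set A := fderiv ℝ φ.toFun 0 with hA
  set g : ℂ → ℂ := fun z => φ.toFun z - A z with hg
  have hdiff : DifferentiableOn ℝ φ.toFun Disk := φ.smooth.differentiableOn (by simp)
  have hgdiff : DifferentiableOn ℝ g Disk := fun x hx =>
    ((hdiff x hx).sub ((A.differentiableAt).differentiableWithinAt))
  have hfd : ∀ x ∈ Disk, fderivWithin ℝ g Disk x = fderivWithin ℝ φ.toFun Disk x - A := by
    intro x hx
    rw [hg]
    rw [fderivWithin_fun_sub (uniqueDiffOn_disk x hx) (hdiff x hx)
      (A.differentiableAt.differentiableWithinAt)]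
    congr 1
    exact (A.hasFDerivAt.hasFDerivWithinAt).fderivWithin (uniqueDiffOn_disk x hx)
  -- continuity of the derivative
  have hcont : ContinuousOn (fun x => fderivWithin ℝ φ.toFun Disk x) Disk :=
    ((φ.smooth.fderivWithin (m := (⊤ : ℕ∞)) uniqueDiffOn_disk (by simp)).continuousOn)
  have hcont0 : ContinuousWithinAt (fun x => fderivWithin ℝ φ.toFun Disk x) Disk 0 :=
    hcont 0 zero_mem_disk
  have h0 : fderivWithin ℝ φ.toFun Disk 0 = A := fderivWithin_eq_fderiv_zero φ
  rw [ContinuousWithinAt, h0] at hcont0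
  have : ∀ᶠ x in nhdsWithin 0 Disk, ‖fderivWithin ℝ φ.toFun Disk x - A‖ ≤ ε := by
    have := hcont0 (Metric.closedBall_mem_nhds A hε)
    filter_upwards [this] with x hx
    have : dist (fderivWithin ℝ φ.toFun Disk x) A ≤ ε := hx
    rwa [dist_eq_norm] at this
  rw [eventually_nhdsWithin_iff] at this
  rcases Metric.eventually_nhds_iff.mp this with ⟨δ, hδpos, hδ⟩
  refine ⟨δ, hδpos, fun z hz hznorm => ?_⟩
  -- apply mean value on Disk ∩ ball 0 δ
  set s := Disk ∩ Metric.ball (0:ℂ) δ with hs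
  have hsconv : Convex ℝ s := convex_disk.inter (convex_ball 0 δ)
  have hsub : s ⊆ Disk := Set.inter_subset_left
  have hgs : DifferentiableOn ℝ g s := hgdiff.mono hsub
  have hbound : ∀ x ∈ s, ‖fderivWithin ℝ g s x‖ ≤ ε := by
    intro x hx
    have hball : Metric.ball (0:ℂ) δ ∈ nhds x := Metric.isOpen_ball.mem_nhds hx.2
    have : fderivWithin ℝ g s x = fderivWithin ℝ g Disk x := by
      rw [hs, fderivWithin_inter hball]
    rw [this, hfd x (hsub hx)]
    apply hδ _ hx.1
    simpa [dist_eq_norm] using mem_ball_iff_norm.mp hx.2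
  have h0s : (0:ℂ) ∈ s := ⟨zero_mem_disk, by simpa using hδpos⟩
  have hzs : z ∈ s := ⟨hz, by simpa [mem_ball_iff_norm] using hznorm⟩
  have := hsconv.norm_image_sub_le_of_norm_fderivWithin_le hgs hbound h0s hzs
  have hg0 : g 0 = 0 := by simp [hg, hfix]
  rw [hg0, sub_zero, sub_zero] at this
  exact this

end Blowup
namespace Blowup

noncomputable def Psi (φ : SmoothDiskDiffeo) (p : ℝ × Real.Angle) : ℂ :=
  if p.1 = 0 then fderiv ℝ φ.toFun 0 (emap p.2)
  else ((Real.sqrt p.1 : ℝ) : ℂ)⁻¹ * φ.toFun (piMap p)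

noncomputable def Phat (φ : SmoothDiskDiffeo) (p : ℝ × Real.Angle) : ℝ × Real.Angle :=
  (Complex.normSq (φ.toFun (piMap p)), ((Psi φ p).arg : Real.Angle))

variable (φ : SmoothDiskDiffeo)

lemma Psi_ne_zero (hfix : φ.toFun 0 = 0) {p : ℝ × Real.Angle} (hp : p ∈ AnnCl) :
    Psi φ p ≠ 0 := by
  rw [Psi]
  rcases eq_or_ne p.1 0 with h | h
  · rw [if_pos h]
    exact fderiv_zero_ne_zero φ hfix (emap_ne_zero p.2)
  · rw [if_neg h]
    have hpa : p ∈ Ann := mem_ann_iff.mpr ⟨lt_of_le_of_ne (mem_annCl_iff.mp hp).1 (Ne.symm h),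
      (mem_annCl_iff.mp hp).2⟩
    have h1 : ((Real.sqrt p.1 : ℝ) : ℂ) ≠ 0 := by
      simp only [ne_eq, Complex.ofReal_eq_zero]
      exact (Real.sqrt_pos.mpr (mem_ann_iff.mp hpa).1).ne'
    exact mul_ne_zero (inv_ne_zero h1) (toFun_ne_zero φ hfix (piMap_mem_disk (ann_subset hpa))
      (piMap_ne_zero hpa))

lemma Phat_eq_hatMap {p : ℝ × Real.Angle} (hp : p ∈ Ann) :
    Phat φ p = hatMap φ.toFun p := by
  have h1 : p.1 ≠ 0 := (mem_ann_iff.mp hp).1.ne'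
  rw [Phat, hatMap, Psi, if_neg h1]
  congr 1
  have hpos : (0:ℝ) < (Real.sqrt p.1)⁻¹ := inv_pos.mpr (Real.sqrt_pos.mpr (mem_ann_iff.mp hp).1)
  rw [← Complex.ofReal_inv, Complex.arg_real_mul _ hpos]

lemma Phat_boundary (hfix : φ.toFun 0 = 0) (θ : Real.Angle) :
    Phat φ (0, θ) = (0, ((fderiv ℝ φ.toFun 0 (emap θ)).arg : Real.Angle)) := by
  rw [Phat, Psi]
  have hpi : piMap ((0:ℝ), θ) = 0 := by
    simp [piMap, Real.sqrt_zero]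
  rw [if_pos rfl]
  simp [hpi, hfix]

lemma Phat_mapsTo_Ann (hfix : φ.toFun 0 = 0) : Set.MapsTo (Phat φ) Ann Ann := by
  intro p hp
  rw [Phat_eq_hatMap φ hp, hatMap, mem_ann_iff]
  constructor
  · simp only
    exact Complex.normSq_pos.mpr (toFun_ne_zero φ hfix (piMap_mem_disk (ann_subset hp))
      (piMap_ne_zero hp))
  · simp only
    have : ‖φ.toFun (piMap p)‖ ≤ 1 := by
      have := φ.mapsTo (piMap_mem_disk (ann_subset hp))
      rwa [Disk, Metric.mem_closedBall, dist_zero_right] at this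
    rw [Complex.normSq_eq_norm_sq]
    nlinarith [norm_nonneg (φ.toFun (piMap p))]

lemma Phat_mapsTo (hfix : φ.toFun 0 = 0) : Set.MapsTo (Phat φ) AnnCl AnnCl := by
  intro p hp
  rcases eq_or_ne p.1 0 with h | h
  · have : p = (0, p.2) := by rw [← h]
    rw [this, Phat_boundary φ hfix]
    exact mem_annCl_iff.mpr ⟨le_refl 0, zero_le_one⟩
  · have hpa : p ∈ Ann := mem_ann_iff.mpr ⟨lt_of_le_of_ne (mem_annCl_iff.mp hp).1 (Ne.symm h),
      (mem_annCl_iff.mp hp).2⟩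
    exact ann_subset (Phat_mapsTo_Ann φ hfix hpa)

lemma hatMap_left_inv (hfix : φ.toFun 0 = 0) {p : ℝ × Real.Angle} (hp : p ∈ Ann) :
    hatMap φ.invFun (hatMap φ.toFun p) = p := by
  set w := φ.toFun (piMap p) with hw
  have hw0 : w ≠ 0 := toFun_ne_zero φ hfix (piMap_mem_disk (ann_subset hp)) (piMap_ne_zero hp)
  have hpi : piMap (hatMap φ.toFun p) = w := piMap_polar w
  have hinv : φ.invFun w = piMap p := by
    rw [hw]; exact φ.left_inv _ (piMap_mem_disk (ann_subset hp))
  rw [hatMap, hpi, hinv]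
  have h1 : Complex.normSq (piMap p) = p.1 := normSq_piMap (mem_ann_iff.mp hp).1.le
  have h2 : ((piMap p).arg : Real.Angle) = p.2 := arg_piMap hp
  rw [h1, h2]

lemma Phat_left_inv (hfix : φ.toFun 0 = 0) {p : ℝ × Real.Angle} (hp : p ∈ AnnCl) :
    Phat φ.symm (Phat φ p) = p := by
  rcases eq_or_ne p.1 0 with h | h
  · -- boundary case
    have hp2 : p = (0, p.2) := by rw [← h]
    rw [hp2, Phat_boundary φ hfix]
    set A := fderiv ℝ φ.toFun 0 with hA
    set u := A (emap p.2) with hu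
    have hu0 : u ≠ 0 := fderiv_zero_ne_zero φ hfix (emap_ne_zero p.2)
    rw [Phat_boundary φ.symm (symm_fix φ hfix)]
    have habs : (0:ℝ) < ‖u‖ := by
      simpa using hu0
    have hemap : emap ((u.arg : Real.Angle)) = ((‖u‖)⁻¹ : ℝ) • u := by
      have := emap_arg u
      have h2 : ((‖u‖ : ℂ))⁻¹ * ((‖u‖ : ℂ) * emap (u.arg : Real.Angle))
          = ((‖u‖ : ℂ))⁻¹ * u := by rw [this]
      rw [← mul_assoc] at h2
      rw [Complex.real_smul, Complex.ofReal_inv]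
      rw [← h2]
      rw [inv_mul_cancel₀ (by simpa using habs.ne'), one_mul]
    refine Prod.ext rfl ?_
    show ((fderiv ℝ (φ.symm).toFun 0 (emap ((u.arg : Real.Angle)))).arg : Real.Angle) = p.2
    rw [hemap]
    have hB : fderiv ℝ (φ.symm).toFun 0 = fderiv ℝ φ.invFun 0 := rfl
    rw [hB, ContinuousLinearMap.map_smul, hu, fderiv_inv_comp φ hfix]
    rw [Complex.real_smul, Complex.arg_real_mul _ (inv_pos.mpr habs)]
    exact arg_emap p.2
  · have hpa : p ∈ Ann := mem_ann_iff.mpr ⟨lt_of_le_of_ne (mem_annCl_iff.mp hp).1 (Ne.symm h),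
      (mem_annCl_iff.mp hp).2⟩
    have hmem : hatMap φ.toFun p ∈ Ann := by
      rw [← Phat_eq_hatMap φ hpa]; exact Phat_mapsTo_Ann φ hfix hpa
    rw [Phat_eq_hatMap φ hpa, Phat_eq_hatMap φ.symm hmem]
    exact hatMap_left_inv φ hfix hpa

end Blowup
namespace Blowup

variable (φ : SmoothDiskDiffeo)

lemma continuousOn_toFun_piMap : ContinuousOn (fun p => φ.toFun (piMap p)) AnnCl :=
  (φ.smooth.continuousOn.comp continuous_piMap.continuousOn (fun _ hp => piMap_mem_disk hp))

lemma continuousOn_Psi (hfix : φ.toFun 0 = 0) : ContinuousOn (Psi φ) AnnCl := by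
  intro q hq
  set A := fderiv ℝ φ.toFun 0 with hA
  rcases eq_or_ne q.1 0 with h | h
  · -- boundary case
    set L : ℝ × Real.Angle → ℂ := fun p => A (emap p.2) with hL
    have hLcont : Continuous L := A.continuous.comp (continuous_emap.comp continuous_snd)
    have hPsiq : Psi φ q = L q := by rw [Psi, if_pos h]
    rw [ContinuousWithinAt, hPsiq]
    have tendsto_sub : Filter.Tendsto (fun p => Psi φ p - L p) (nhdsWithin q AnnCl) (nhds 0) := by
      rw [NormedAddCommGroup.tendsto_nhds_zero]
      intro ε hε
      obtain ⟨δ, hδpos, hδ⟩ := taylor φ hfix (half_pos hε)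
      have hmem : {p : ℝ × Real.Angle | p.1 < δ^2} ∈ nhdsWithin q AnnCl := by
        apply mem_nhdsWithin_of_mem_nhds
        apply (isOpen_lt continuous_fst continuous_const).mem_nhds
        simp only [Set.mem_setOf_eq, h]
        positivity
      filter_upwards [hmem, self_mem_nhdsWithin] with p hpδ hpA
      rcases eq_or_ne p.1 0 with h' | h'
      · have : Psi φ p = L p := by rw [Psi, if_pos h']
        rw [this, sub_self, norm_zero]
        exact hε
      · have hpa : p ∈ Ann := mem_ann_iff.mpr ⟨lt_of_le_of_ne (mem_annCl_iff.mp hpA).1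
          (Ne.symm h'), (mem_annCl_iff.mp hpA).2⟩
        have ht : 0 < p.1 := (mem_ann_iff.mp hpa).1
        set z := piMap p with hz
        have hznorm : ‖z‖ = Real.sqrt p.1 := by
          rw [abs_piMap]
        have hzlt : ‖z‖ < δ := by
          rw [hznorm]
          calc Real.sqrt p.1 < Real.sqrt (δ^2) := by
                exact Real.sqrt_lt_sqrt ht.le hpδ
            _ = δ := Real.sqrt_sq hδpos.le
        have hzD : z ∈ Disk := piMap_mem_disk (ann_subset hpa)
        have hsq : (0:ℝ) < Real.sqrt p.1 := Real.sqrt_pos.mpr ht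
        have hAz : A z = (Real.sqrt p.1 : ℂ) * A (emap p.2) := by
          rw [hz, piMap, ← Complex.real_smul, ContinuousLinearMap.map_smul, Complex.real_smul]
        have hdiff : Psi φ p - L p = ((Real.sqrt p.1 : ℝ) : ℂ)⁻¹ * (φ.toFun z - A z) := by
          rw [Psi, if_neg h', hL]
          simp only
          rw [mul_sub, hAz, ← mul_assoc, inv_mul_cancel₀ (by
            simpa using hsq.ne'), one_mul, hz]
        rw [hdiff, norm_mul]
        have h1 : ‖((Real.sqrt p.1 : ℝ) : ℂ)⁻¹‖ = (Real.sqrt p.1)⁻¹ := by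
          rw [norm_inv, Complex.norm_real, Real.norm_eq_abs, _root_.abs_of_pos hsq]
        rw [h1]
        calc (Real.sqrt p.1)⁻¹ * ‖φ.toFun z - A z‖
            ≤ (Real.sqrt p.1)⁻¹ * (ε/2 * ‖z‖) := by
              apply mul_le_mul_of_nonneg_left (hδ z hzD hzlt) (by positivity)
          _ = ε/2 := by
              rw [hznorm]
              field_simp
          _ < ε := half_lt_self hε
    have hLt : Filter.Tendsto L (nhdsWithin q AnnCl) (nhds (L q)) :=
      hLcont.continuousAt.continuousWithinAt
    have := tendsto_sub.add hLt
    simp only [zero_add] at this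
    convert this using 1
    funext p
    simp
  · -- interior case
    have hq1 : 0 < q.1 := lt_of_le_of_ne (mem_annCl_iff.mp hq).1 (Ne.symm h)
    have hnhds : {p : ℝ × Real.Angle | 0 < p.1} ∈ nhds q :=
      (isOpen_lt continuous_const continuous_fst).mem_nhds hq1
    have hf : ContinuousWithinAt
        (fun p => ((Real.sqrt p.1 : ℝ) : ℂ)⁻¹ * φ.toFun (piMap p)) AnnCl q := by
      apply ContinuousWithinAt.mul
      · apply ContinuousAt.continuousWithinAt
        apply ContinuousAt.inv₀
        · exact (Complex.continuous_ofReal.comp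
            (Real.continuous_sqrt.comp continuous_fst)).continuousAt
        · simpa using (Real.sqrt_pos.mpr hq1).ne'
      · exact continuousOn_toFun_piMap φ q hq
    apply hf.congr_of_eventuallyEq
    · filter_upwards [mem_nhdsWithin_of_mem_nhds hnhds] with p hp
      rw [Psi, if_neg hp.ne']
    · rw [Psi, if_neg h]

lemma continuousOn_Phat (hfix : φ.toFun 0 = 0) : ContinuousOn (Phat φ) AnnCl := by
  apply ContinuousOn.prodMk
  · exact Complex.continuous_normSq.comp_continuousOn (continuousOn_toFun_piMap φ)
  · intro q hq
    exact (Complex.continuousAt_arg_coe_angle (Psi_ne_zero φ hfix hq)).comp_continuousWithinAt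
      (continuousOn_Psi φ hfix q hq)

lemma hatMap_mapsTo_Ann (hfix : φ.toFun 0 = 0) : Set.MapsTo (hatMap φ.toFun) Ann Ann := by
  intro p hp
  rw [← Phat_eq_hatMap φ hp]
  exact Phat_mapsTo_Ann φ hfix hp

lemma injOn_hatMap_Ann (hfix : φ.toFun 0 = 0) : Set.InjOn (hatMap φ.toFun) Ann := by
  intro p hp q hq hpq
  have h1 := hatMap_left_inv φ hfix hp
  rw [hpq, hatMap_left_inv φ hfix hq] at h1
  exact h1.symm

lemma continuousOn_hatMap_Ann (hfix : φ.toFun 0 = 0) :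
    ContinuousOn (hatMap φ.toFun) Ann := by
  apply ContinuousOn.congr ((continuousOn_Phat φ hfix).mono ann_subset)
  intro p hp
  exact (Phat_eq_hatMap φ hp).symm

end Blowup
namespace Blowup

open Real

noncomputable def gR : ℝ × ℝ → ℝ × ℝ := fun x => (√x.1 * Real.cos x.2, √x.1 * Real.sin x.2)

theorem hasFDerivAt_gR {x : ℝ × ℝ} (hx : x.1 ≠ 0) :
    HasFDerivAt gR (LinearMap.toContinuousLinearMap
      (Matrix.toLin (Module.Basis.finTwoProd ℝ) (Module.Basis.finTwoProd ℝ)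
      !![Real.cos x.2 * (1 / (2 * √x.1)), -(√x.1 * Real.sin x.2);
         Real.sin x.2 * (1 / (2 * √x.1)), √x.1 * Real.cos x.2])) x := by
  rw [Matrix.toLin_finTwoProd_toContinuousLinearMap]
  convert HasFDerivAt.prodMk
    (((Real.hasDerivAt_sqrt hx).comp_hasFDerivAt x hasFDerivAt_fst).mul
      ((Real.hasDerivAt_cos x.2).comp_hasFDerivAt x hasFDerivAt_snd))
    (((Real.hasDerivAt_sqrt hx).comp_hasFDerivAt x hasFDerivAt_fst).mul
      ((Real.hasDerivAt_sin x.2).comp_hasFDerivAt x (hasFDerivAt_snd (𝕜 := ℝ) (p := x)))) using 2 <;> try rfl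
  all_goals
  · apply ContinuousLinearMap.ext
    intro v
    simp [smul_smul]
    try ring
    try simp

lemma det_gR {x : ℝ × ℝ} (hx : 0 < x.1) :
    (LinearMap.toContinuousLinearMap
      (Matrix.toLin (Module.Basis.finTwoProd ℝ) (Module.Basis.finTwoProd ℝ)
      !![Real.cos x.2 * (1 / (2 * √x.1)), -(√x.1 * Real.sin x.2);
         Real.sin x.2 * (1 / (2 * √x.1)), √x.1 * Real.cos x.2])).det = 1/2 := by
  have hs : √x.1 ≠ 0 := (Real.sqrt_pos.mpr hx).ne'
  simp only [LinearMap.det_toContinuousLinearMap, LinearMap.det_toLin, Matrix.det_fin_two_of]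
  have hcs := Real.sin_sq_add_cos_sq x.2
  field_simp
  linear_combination hcs

noncomputable def Q : ℝ × ℝ → ℝ × Real.Angle := fun x => (x.1, (x.2 : Real.Angle))

lemma measurable_Q : Measurable Q :=
  measurable_fst.prodMk (Real.Angle.continuous_coe.measurable.comp measurable_snd)

lemma measurePreserving_Q :
    MeasurePreserving Q
      ((volume : Measure (ℝ × ℝ)).restrict (Set.univ ×ˢ Set.Ioc (-π) π))
      (volume : Measure (ℝ × Real.Angle)) := by
  have h := (MeasurePreserving.id (volume : Measure ℝ)).prod
    (AddCircle.measurePreserving_mk (2*π) (-π))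
  have h2 : -π + 2*π = π := by ring
  rw [h2] at h
  have h3 : (volume : Measure ℝ).prod ((volume : Measure ℝ).restrict (Set.Ioc (-π) π)) =
      ((volume : Measure (ℝ × ℝ)).restrict (Set.univ ×ˢ Set.Ioc (-π) π)) := by
    rw [← Measure.restrict_univ (μ := (volume : Measure ℝ)), Measure.prod_restrict,
      Measure.restrict_univ]
    rfl
  rw [h3] at h
  exact h

lemma injOn_gR_aux : Set.InjOn gR ({x : ℝ × ℝ | 0 < x.1} ∩ Set.univ ×ˢ Set.Ioc (-π) π) := by
  rintro x ⟨hx1, -, hx2⟩ y ⟨hy1, -, hy2⟩ h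
  have h1 : √x.1 * Real.cos x.2 = √y.1 * Real.cos y.2 := congrArg Prod.fst h
  have h2 : √x.1 * Real.sin x.2 = √y.1 * Real.sin y.2 := congrArg Prod.snd h
  have hx1' : (0:ℝ) < √x.1 := Real.sqrt_pos.mpr hx1
  have hy1' : (0:ℝ) < √y.1 := Real.sqrt_pos.mpr hy1
  have hsum : x.1 = y.1 := by
    have hx : (√x.1 * Real.cos x.2)^2 + (√x.1 * Real.sin x.2)^2 = x.1 := by
      have := Real.sin_sq_add_cos_sq x.2
      have hsq : √x.1 ^ 2 = x.1 := Real.sq_sqrt hx1.le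
      nlinarith [this, hsq]
    have hy : (√y.1 * Real.cos y.2)^2 + (√y.1 * Real.sin y.2)^2 = y.1 := by
      have := Real.sin_sq_add_cos_sq y.2
      have hsq : √y.1 ^ 2 = y.1 := Real.sq_sqrt hy1.le
      nlinarith [this, hsq]
    rw [← hx, ← hy, h1, h2]
  have hs : √x.1 = √y.1 := by rw [hsum]
  have hcos : Real.cos x.2 = Real.cos y.2 := by
    rw [hs] at h1
    exact mul_left_cancel₀ hy1'.ne' h1
  have hsin : Real.sin x.2 = Real.sin y.2 := by
    rw [hs] at h2
    exact mul_left_cancel₀ hy1'.ne' h2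
  have harg : x.2 = y.2 := by
    have hax := Complex.arg_cos_add_sin_mul_I hx2
    have hay := Complex.arg_cos_add_sin_mul_I hy2
    have hC : (Complex.cos x.2 + Complex.sin x.2 * Complex.I)
        = (Complex.cos y.2 + Complex.sin y.2 * Complex.I) := by
      rw [← Complex.ofReal_cos, ← Complex.ofReal_sin, ← Complex.ofReal_cos,
        ← Complex.ofReal_sin, hcos, hsin]
    rw [← hax, hC, hay]
  exact Prod.ext hsum harg

lemma piMap_Q (x : ℝ × ℝ) :
    piMap (Q x) = Complex.measurableEquivRealProd.symm (gR x) := by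
  apply Complex.measurableEquivRealProd.injective
  rw [Complex.measurableEquivRealProd.apply_symm_apply]
  have h1 : piMap (Q x) = ((√x.1 : ℝ) : ℂ) * (((Real.cos x.2 : ℝ) : ℂ)
      + ((Real.sin x.2 : ℝ) : ℂ) * Complex.I) := by
    rw [piMap, Q]
    simp [emap, Real.Angle.cos_coe, Real.Angle.sin_coe]
  have h2 : Complex.measurableEquivRealProd (piMap (Q x)) =
      ((piMap (Q x)).re, (piMap (Q x)).im) := rfl
  rw [h2, h1, gR]
  refine Prod.ext ?_ ?_ <;>
    simp [Complex.mul_re, Complex.mul_im, Complex.add_re, Complex.add_im, Complex.cos_ofReal_re, Complex.sin_ofReal_re]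

lemma volume_symm_image (T : Set (ℝ × ℝ)) :
    volume (Complex.measurableEquivRealProd.symm '' T) = volume T := by
  have h1 : Complex.measurableEquivRealProd.symm '' T = Complex.measurableEquivRealProd ⁻¹' T := by
    rw [← MeasurableEquiv.coe_toEquiv_symm, Equiv.image_eq_preimage_symm]
    rfl
  rw [h1, ← MeasurableEquiv.map_apply, Complex.volume_preserving_equiv_real_prod.map_eq]

lemma vol_eq_two_mul {S : Set (ℝ × Real.Angle)} (hS : MeasurableSet S) (hSA : S ⊆ Ann) :
    volume S = 2 * volume (piMap '' S) := by
  set F := Q ⁻¹' S ∩ Set.univ ×ˢ Set.Ioc (-π) π with hF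
  have hFmeas : MeasurableSet F :=
    (measurable_Q hS).inter (MeasurableSet.univ.prod measurableSet_Ioc)
  have hFpos : ∀ x ∈ F, 0 < x.1 := by
    rintro x ⟨hx1, -⟩
    exact (mem_ann_iff.mp (hSA hx1)).1
  -- volume S = volume F
  have hvolF : volume S = volume F := by
    have := measurePreserving_Q.measure_preimage hS.nullMeasurableSet
    rw [← this, Measure.restrict_apply (measurable_Q hS)]
  -- S = Q '' F
  have hQF : Q '' F = S := by
    apply Set.Subset.antisymm
    · rintro p ⟨x, ⟨hx1, -⟩, rfl⟩
      exact hx1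
    · intro p hp
      refine ⟨(p.1, p.2.toReal), ⟨?_, trivial, p.2.toReal_mem_Ioc⟩, ?_⟩
      · show Q (p.1, p.2.toReal) ∈ S
        have : Q (p.1, p.2.toReal) = p := by
          rw [Q]
          exact Prod.ext rfl (p.2.coe_toReal)
        rwa [this]
      · rw [Q]
        exact Prod.ext rfl (p.2.coe_toReal)
  -- piMap '' S = e.symm '' (gR '' F)
  have himg : piMap '' S = Complex.measurableEquivRealProd.symm '' (gR '' F) := by
    rw [← hQF, ← Set.image_comp, ← Set.image_comp]
    apply Set.image_congr
    intro x _
    exact piMap_Q x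
  -- change of variables for gR on F
  have hderiv : ∀ x ∈ F, HasFDerivAt gR (LinearMap.toContinuousLinearMap
      (Matrix.toLin (Module.Basis.finTwoProd ℝ) (Module.Basis.finTwoProd ℝ)
      !![Real.cos x.2 * (1 / (2 * √x.1)), -(√x.1 * Real.sin x.2);
         Real.sin x.2 * (1 / (2 * √x.1)), √x.1 * Real.cos x.2])) x :=
    fun x hx => hasFDerivAt_gR (hFpos x hx).ne'
  have hinj : Set.InjOn gR F := by
    apply injOn_gR_aux.mono
    intro x hx
    exact ⟨hFpos x hx, hx.2⟩
  have hcov := lintegral_abs_det_fderiv_eq_addHaar_image volume hFmeas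
    (fun x hx => (hderiv x hx).hasFDerivWithinAt) hinj
  have hconst : ∫⁻ x in F, ENNReal.ofReal |(LinearMap.toContinuousLinearMap
      (Matrix.toLin (Module.Basis.finTwoProd ℝ) (Module.Basis.finTwoProd ℝ)
      !![Real.cos x.2 * (1 / (2 * √x.1)), -(√x.1 * Real.sin x.2);
         Real.sin x.2 * (1 / (2 * √x.1)), √x.1 * Real.cos x.2])).det| =
      2⁻¹ * volume F := by
    rw [setLIntegral_congr_fun hFmeas (g := fun _ => 2⁻¹) ?_]
    · rw [setLIntegral_const, mul_comm]
    · intro x hx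
      dsimp only
      rw [det_gR (hFpos x hx)]
      rw [show |(1:ℝ)/2| = (2:ℝ)⁻¹ by norm_num]
      rw [ENNReal.ofReal_inv_of_pos two_pos]
      norm_num
  rw [hconst] at hcov
  rw [himg, volume_symm_image, ← hcov, hvolF, ← mul_assoc]
  rw [ENNReal.mul_inv_cancel (by norm_num) (by norm_num), one_mul]

end Blowup
namespace Blowup

lemma measure_part (φ : SmoothDiskDiffeo) (hfix : φ.toFun 0 = 0)
    (hdet : ∀ z ∈ Disk, (fderivWithin ℝ φ.toFun Disk z).det = 1)
    {E : Set (ℝ × Real.Angle)} (hE : MeasurableSet E) (hEA : E ⊆ Ann) :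
    volume (hatMap φ.toFun '' E) = volume E := by
  have hIm : MeasurableSet (hatMap φ.toFun '' E) :=
    hE.image_of_continuousOn_injOn ((continuousOn_hatMap_Ann φ hfix).mono hEA)
      ((injOn_hatMap_Ann φ hfix).mono hEA)
  have hImA : hatMap φ.toFun '' E ⊆ Ann := by
    rintro _ ⟨p, hp, rfl⟩
    exact hatMap_mapsTo_Ann φ hfix (hEA hp)
  have hs : MeasurableSet (piMap '' E) :=
    hE.image_of_continuousOn_injOn continuous_piMap.continuousOn (injOn_piMap.mono hEA)
  have hsD : piMap '' E ⊆ Disk := by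
    rintro _ ⟨p, hp, rfl⟩
    exact piMap_mem_disk (ann_subset (hEA hp))
  have himg : piMap '' (hatMap φ.toFun '' E) = φ.toFun '' (piMap '' E) := by
    rw [← Set.image_comp, ← Set.image_comp]
    apply Set.image_congr
    intro p _
    exact piMap_polar _
  have hchg : volume (φ.toFun '' (piMap '' E)) = volume (piMap '' E) := by
    have hcov := lintegral_abs_det_fderiv_eq_addHaar_image (volume : Measure ℂ) hs
      (fun x hx => ((φ.smooth.differentiableOn (by simp) x (hsD hx)).hasFDerivWithinAt).mono hsD)
      ((injOn_toFun φ).mono hsD)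
    rw [← hcov]
    rw [setLIntegral_congr_fun hs (g := fun _ => 1)
      (fun x hx => by rw [hdet x (hsD hx)]; norm_num)]
    exact setLIntegral_one _
  rw [vol_eq_two_mul hIm hImA, himg, hchg, ← vol_eq_two_mul hE hEA]

lemma symm_symm (φ : SmoothDiskDiffeo) : φ.symm.symm = φ := rfl

end Blowup

/-- **Blow-up of the fixed point at the origin.**  Let `φ` be a smooth diffeomorphism
of the closed disk fixing `0` and `π(t,x) = √t·x`.  Then:
(i) if `φ` is area preserving, the conjugated map `π⁻¹ ∘ φ ∘ π` preserves the measure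
`dt ⊗ dθ` on the half-open annulus `(0,1] × S¹`; and
(ii) `π⁻¹ ∘ φ ∘ π` extends to a homeomorphism of the closed annulus `[0,1] × S¹` whose
value on the inner boundary is `(0, θ) ↦ (0, arg(Dφ(0)[e^{iθ}]))`. -/
theorem blowup_of_fixed_point (φ : SmoothDiskDiffeo) (hfix : φ.toFun 0 = 0) :
    ((∀ z ∈ Disk, (fderivWithin ℝ φ.toFun Disk z).det = 1) →
      ∀ E : Set (ℝ × Real.Angle), MeasurableSet E → E ⊆ Ann →
        volume (hatMap φ.toFun '' E) = volume E) ∧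
    (∃ φhat : ℝ × Real.Angle → ℝ × Real.Angle,
      ContinuousOn φhat AnnCl ∧
      Set.BijOn φhat AnnCl AnnCl ∧
      (∃ ψ : ℝ × Real.Angle → ℝ × Real.Angle,
        ContinuousOn ψ AnnCl ∧ Set.InvOn ψ φhat AnnCl AnnCl) ∧
      (∀ p ∈ Ann, φhat p = hatMap φ.toFun p) ∧
      (∀ θ : Real.Angle,
        φhat (0, θ) =
          (0, (Complex.arg (fderivWithin ℝ φ.toFun Disk 0 (emap θ)) : Real.Angle)))) := by
  
  have hfix' : φ.symm.toFun 0 = 0 := Blowup.symm_fix φ hfix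
  have hInv : Set.InvOn (Blowup.Phat φ.symm) (Blowup.Phat φ) AnnCl AnnCl := by
    constructor
    · intro p hp
      exact Blowup.Phat_left_inv φ hfix hp
    · intro p hp
      have := Blowup.Phat_left_inv φ.symm hfix' hp
      rwa [Blowup.symm_symm] at this
  constructor
  · intro hdet E hE hEA
    exact Blowup.measure_part φ hfix hdet hE hEA
  · refine ⟨Blowup.Phat φ, Blowup.continuousOn_Phat φ hfix, ?_, ?_, ?_, ?_⟩
    · exact hInv.bijOn (Blowup.Phat_mapsTo φ hfix) (Blowup.Phat_mapsTo φ.symm hfix')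
    · exact ⟨Blowup.Phat φ.symm, Blowup.continuousOn_Phat φ.symm hfix', hInv⟩
    · intro p hp
      exact Blowup.Phat_eq_hatMap φ hp
    · intro θ
      rw [Blowup.fderivWithin_eq_fderiv_zero φ]
      exact Blowup.Phat_boundary φ hfix θ
end

section
/- Let f : S¹ → S¹ be an orientation-preserving C^∞ diffeomorphism of the circle whose rotation number is irrational. Then for every ε > 0 there exists t ∈ (0, ε] such that the rotation number of the composition R_{2πt} ∘ f (where R_{2πt}(z) = e^{2πit}z) belongs to the set 𝒟 of Diophantine numbers; moreover for every t ∈ (0, 1/2], rot(R_{2πt} ∘ f) > rot(f) in the sense that the corresponding translation numbers of the naturally associated lifts satisfy a strict inequality. -/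
open Complex Metric Set Filter

/-- A real number is Diophantine (in the sense of this paper) if it is irrational and
satisfies `|α − p/q| ≥ C/qⁿ` for some `n ≥ 2`, `C > 0` and all rationals `p/q`. -/
def IsDiophantine (α : ℝ) : Prop :=
  Irrational α ∧ ∃ n : ℕ, 2 ≤ n ∧ ∃ C : ℝ, 0 < C ∧
    ∀ (p : ℤ) (q : ℕ), 1 ≤ q → C / (q : ℝ) ^ n ≤ |α - (p : ℝ) / (q : ℝ)|

/-- The lift of the rotation `R_{2πt}` composed with a circle map lift `F`:
`x ↦ F x + t`. -/
noncomputable def rotLift (t : ℝ) (F : CircleDeg1Lift) : CircleDeg1Lift :=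
  ((CircleDeg1Lift.translate (Multiplicative.ofAdd t) : CircleDeg1Liftˣ) :
    CircleDeg1Lift) * F

open Polynomial in
lemma isDiophantine_of_quadratic_sqrt2 {N : ℕ} (hN : 0 < N) (m : ℤ) :
    IsDiophantine (((m : ℝ) + Real.sqrt 2) / N) := by
  set α : ℝ := ((m : ℝ) + Real.sqrt 2) / N with hα
  have hNR : (0:ℝ) < N := by exact_mod_cast hN
  have hirr : Irrational α :=
    ((irrational_sqrt_two.intCast_add m).div_natCast hN.ne')
  refine ⟨hirr, 2, le_refl 2, ?_⟩
  set f : ℤ[X] := C ((N:ℤ)^2) * X ^ 2 + C (-2*N*m) * X + C (m^2-2) with hf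
  have hN2 : ((N:ℤ)^2) ≠ 0 := by positivity
  have hdeg : f.natDegree = 2 := Polynomial.natDegree_quadratic hN2
  have hf0 : f ≠ 0 := fun h => by simp [h] at hdeg
  have hsq : Real.sqrt 2 ^ 2 = 2 := Real.sq_sqrt (by norm_num)
  have heval : eval α (map (algebraMap ℤ ℝ) f) = 0 := by
    simp only [hf, Polynomial.map_add, Polynomial.map_mul, Polynomial.map_pow,
      Polynomial.map_C, Polynomial.map_X, eval_add, eval_mul, eval_pow, eval_C, eval_X]
    push_cast
    rw [hα]
    field_simp
    simp only [eq_intCast, Int.cast_ofNat, map_ofNat]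
    nlinarith [hsq]
  obtain ⟨A, hA, hbound⟩ := Liouville.exists_pos_real_of_irrational_root hirr hf0 heval
  refine ⟨1/A, by positivity, ?_⟩
  intro p q hq
  have hb := hbound p (q - 1)
  rw [hdeg] at hb
  have hq1 : ((q - 1 : ℕ) : ℝ) + 1 = (q : ℝ) := by
    have : 1 ≤ q := hq
    push_cast [Nat.cast_sub this]
    ring
  rw [hq1] at hb
  have hqR : (0:ℝ) < q := by exact_mod_cast hq
  have h1 : 1 ≤ (q:ℝ)^2 * (|α - p / q| * A) := hb
  rw [div_le_iff₀ (by positivity : (0:ℝ) < (q:ℝ)^2), div_le_iff₀ hA]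
  nlinarith [abs_nonneg (α - (p:ℝ)/q)]

lemma exists_isDiophantine_btwn {u v : ℝ} (h : u < v) :
    ∃ α : ℝ, u < α ∧ α < v ∧ IsDiophantine α := by
  obtain ⟨N, hN⟩ := exists_nat_gt (2 / (v - u))
  have h2 : 0 < 2 / (v - u) := div_pos two_pos (by linarith)
  have hN0 : 0 < N := by exact_mod_cast h2.trans hN
  have hNR : (0:ℝ) < N := by exact_mod_cast hN0
  have hNvu : 2 < (N:ℝ) * (v - u) := by
    rw [div_lt_iff₀ (by linarith)] at hN
    linarith
  set m : ℤ := ⌊(N:ℝ)*u - Real.sqrt 2⌋ + 1 with hm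
  have hm1 : (N:ℝ)*u - Real.sqrt 2 < m := by
    push_cast [hm]
    exact Int.lt_floor_add_one _
  have hm2 : (m:ℝ) ≤ (N:ℝ)*u - Real.sqrt 2 + 1 := by
    push_cast [hm]
    have := Int.floor_le ((N:ℝ)*u - Real.sqrt 2)
    linarith
  refine ⟨((m : ℝ) + Real.sqrt 2) / N, ?_, ?_, isDiophantine_of_quadratic_sqrt2 hN0 m⟩
  · rw [lt_div_iff₀ hNR]; linarith
  · rw [div_lt_iff₀ hNR]; nlinarith

lemma rotLift_apply (t : ℝ) (F : CircleDeg1Lift) (x : ℝ) : rotLift t F x = t + F x := rfl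

lemma rotLift_zero (F : CircleDeg1Lift) : rotLift 0 F = F := by
  ext x; simp [rotLift_apply]

lemma rotLift_mono (F : CircleDeg1Lift) {s t : ℝ} (h : s ≤ t) : rotLift s F ≤ rotLift t F :=
  fun x => by simp only [rotLift_apply]; linarith

lemma rotLift_pow_ge (F : CircleDeg1Lift) {t : ℝ} (ht : 0 ≤ t) :
    ∀ n : ℕ, 1 ≤ n → ∀ x : ℝ, (F ^ n) x + t ≤ ((rotLift t F) ^ n) x := by
  intro n hn
  induction n with
  | zero => omega
  | succ m ih =>
    intro x
    rcases Nat.eq_or_lt_of_le hn with h1 | h1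
    · simp [← h1, rotLift_apply]; linarith [le_refl (F x)]
    · have hm : 1 ≤ m := by omega
      have h2 := ih hm x
      calc (F ^ (m+1)) x + t = F ((F ^ m) x) + t := by
            rw [pow_succ']; rfl
        _ ≤ F ((F ^ m) x + t) + t := by
            have := F.mono (le_add_of_nonneg_right (a := (F ^ m) x) ht); linarith
        _ ≤ t + F (((rotLift t F) ^ m) x) := by
            have := F.mono h2; linarith
        _ = ((rotLift t F) ^ (m+1)) x := by rw [pow_succ']; rfl

lemma exists_near_int {α t : ℝ} (hirr : Irrational α) (ht : 0 < t) (ht2 : t ≤ 1/2) :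
    ∃ q : ℕ, 1 ≤ q ∧ ∃ p : ℤ, (q : ℝ) * α < p ∧ (p : ℝ) ≤ q * α + t := by
  obtain ⟨n, hn⟩ := exists_nat_gt (1 / t)
  have hn0 : 0 < n := by
    have : 0 < 1 / t := by positivity
    exact_mod_cast this.trans hn
  obtain ⟨j, k, hk0, hkn, hjk⟩ := Real.exists_int_int_abs_mul_sub_le α hn0
  have hlt : |(k : ℝ) * α - j| < t := by
    refine hjk.trans_lt ?_
    rw [div_lt_iff₀ (by positivity)]
    rw [div_lt_iff₀ ht] at hn
    calc (1:ℝ) < t * n := by linarith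
      _ ≤ t * (n + 1) := by nlinarith
  set β : ℝ := (k : ℝ) * α - j with hβ
  have hβirr : Irrational β := (hirr.intCast_mul hk0.ne').sub_intCast j
  have hβne : β ≠ 0 := fun h => by simpa [h] using hβirr.ne_int 0
  rcases hβne.lt_or_gt with hneg | hpos
  · refine ⟨k.toNat, by omega, j, ?_, ?_⟩
    · have hk' : ((k.toNat : ℕ) : ℝ) = (k : ℝ) := by exact_mod_cast congrArg (Int.cast : ℤ → ℝ) (Int.toNat_of_nonneg hk0.le)
      rw [hk']
      have : |β| < t := hlt
      nlinarith [abs_nonneg β]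
    · have hk' : ((k.toNat : ℕ) : ℝ) = (k : ℝ) := by exact_mod_cast congrArg (Int.cast : ℤ → ℝ) (Int.toNat_of_nonneg hk0.le)
      rw [hk']
      have habs : -β ≤ |β| := neg_le_abs β
      have : |β| < t := hlt
      linarith
  · have hβt : β < t := lt_of_abs_lt hlt
    set m : ℤ := ⌈(1 - t) / β⌉ with hm
    have h1t : (0:ℝ) < 1 - t := by linarith
    have hm1 : 1 ≤ m := by
      have h0 : (0:ℝ) < (1 - t) / β := by positivity
      have := Int.lt_ceil.mpr (by exact_mod_cast h0 : ((0:ℤ):ℝ) < (1 - t) / β)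
      omega
    have hmb1 : 1 - t ≤ (m : ℝ) * β := by
      have := Int.le_ceil ((1 - t) / β)
      calc 1 - t = (1 - t) / β * β := by field_simp
        _ ≤ (m : ℝ) * β := by nlinarith
    have hmb2 : (m : ℝ) * β < 1 := by
      have := Int.ceil_lt_add_one ((1 - t) / β)
      have h2 : (m:ℝ) * β < ((1-t)/β + 1) * β := by
        have hmlt : (m:ℝ) < (1-t)/β + 1 := this
        nlinarith
      have h3 : ((1-t)/β + 1) * β = 1 - t + β := by field_simp
      rw [h3] at h2
      linarith
    refine ⟨(m * k).toNat, ?_, m * j + 1, ?_, ?_⟩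
    · have : (0:ℤ) < m * k := mul_pos (by omega) hk0
      omega
    all_goals {
      have hmk : (((m * k).toNat : ℕ) : ℝ) = (m : ℝ) * k := by
        have : (0:ℤ) ≤ m * k := le_of_lt (mul_pos (by omega) hk0)
        exact_mod_cast congrArg (Int.cast : ℤ → ℝ) (Int.toNat_of_nonneg this)
      rw [hmk]
      have : (m:ℝ) * k * α = m * j + m * β := by rw [hβ]; ring
      push_cast
      nlinarith }

open CircleDeg1Lift in
lemma transNum_rotLift_gt (F : CircleDeg1Lift) (hc : Continuous F)
    (hirr : Irrational F.translationNumber)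
    {t : ℝ} (ht : 0 < t) (ht2 : t ≤ 1/2)
    (hnear : ∃ q : ℕ, 1 ≤ q ∧ ∃ p : ℤ,
      (q : ℝ) * F.translationNumber < p ∧ (p : ℝ) ≤ q * F.translationNumber + t) :
    F.translationNumber < (rotLift t F).translationNumber := by
  obtain ⟨q, hq, p, hp1, hp2⟩ := hnear
  have hqR : (0:ℝ) < q := by exact_mod_cast hq
  obtain ⟨x, hx⟩ := (F ^ q).exists_eq_add_translationNumber (F.continuous_pow hc q)
  rw [CircleDeg1Lift.translationNumber_pow] at hx
  have hkey : x + (p:ℝ) ≤ ((rotLift t F) ^ q) x := by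
    have h := rotLift_pow_ge F ht.le q hq x
    rw [hx] at h
    linarith
  have h2 : (p:ℝ) ≤ ((rotLift t F) ^ q).translationNumber :=
    CircleDeg1Lift.le_translationNumber_of_add_int_le _ hkey
  rw [CircleDeg1Lift.translationNumber_pow] at h2
  nlinarith

lemma cont_pow_zero (F : CircleDeg1Lift) (hc : Continuous F) (q : ℕ) :
    Continuous (fun s : ℝ => ((rotLift s F) ^ q) 0) := by
  induction q with
  | zero =>
    have : (fun s : ℝ => ((rotLift s F) ^ 0) 0) = fun _ => (0:ℝ) := by
      funext s; simp
    rw [this]; exact continuous_const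
  | succ m ih =>
    have : (fun s : ℝ => ((rotLift s F) ^ (m+1)) 0)
        = fun s => s + F (((rotLift s F) ^ m) 0) := by
      funext s; rw [pow_succ']; rfl
    rw [this]
    exact continuous_id.add (hc.comp ih)

lemma cont_phi (F : CircleDeg1Lift) (hc : Continuous F) :
    Continuous (fun t : ℝ => (rotLift t F).translationNumber) := by
  rw [continuous_iff_continuousAt]
  intro t0
  rw [Metric.continuousAt_iff]
  intro η hη
  set α0 := (rotLift t0 F).translationNumber with hα0
  obtain ⟨r2, hr2a, hr2b⟩ := exists_rat_btwn (lt_add_of_pos_right α0 hη)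
  obtain ⟨r1, hr1a, hr1b⟩ := exists_rat_btwn (sub_lt_self α0 hη)
  have hq2 : (0:ℝ) < (r2.den : ℝ) := by exact_mod_cast r2.pos
  have hq1 : (0:ℝ) < (r1.den : ℝ) := by exact_mod_cast r1.pos
  -- upper bound set
  have hup : ((rotLift t0 F) ^ r2.den).translationNumber < r2.num := by
    rw [CircleDeg1Lift.translationNumber_pow]
    have : α0 < (r2.num : ℝ) / r2.den := by rwa [← Rat.cast_def]
    rw [lt_div_iff₀ hq2] at this
    linarith
  have hup0 : ((rotLift t0 F) ^ r2.den) 0 < 0 + (r2.num : ℝ) :=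
    CircleDeg1Lift.map_lt_of_translationNumber_lt_int _ hup 0
  have hlo : (r1.num : ℝ) < ((rotLift t0 F) ^ r1.den).translationNumber := by
    rw [CircleDeg1Lift.translationNumber_pow]
    have : (r1.num : ℝ) / r1.den < α0 := by rwa [← Rat.cast_def]
    rw [div_lt_iff₀ hq1] at this
    linarith
  have hlo0 : (0:ℝ) + (r1.num : ℝ) < ((rotLift t0 F) ^ r1.den) 0 :=
    CircleDeg1Lift.lt_map_of_int_lt_translationNumber _ hlo 0
  -- open sets
  have hopen2 : IsOpen {s : ℝ | ((rotLift s F) ^ r2.den) 0 < 0 + (r2.num : ℝ)} :=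
    isOpen_lt (cont_pow_zero F hc r2.den) continuous_const
  have hopen1 : IsOpen {s : ℝ | (0:ℝ) + (r1.num : ℝ) < ((rotLift s F) ^ r1.den) 0} :=
    isOpen_lt continuous_const (cont_pow_zero F hc r1.den)
  obtain ⟨δ2, hδ2, hball2⟩ := Metric.isOpen_iff.1 hopen2 t0 hup0
  obtain ⟨δ1, hδ1, hball1⟩ := Metric.isOpen_iff.1 hopen1 t0 hlo0
  refine ⟨min δ1 δ2, lt_min hδ1 hδ2, ?_⟩
  intro s hs
  have hs1 : s ∈ Metric.ball t0 δ1 := Metric.mem_ball.2 (lt_of_lt_of_le hs (min_le_left _ _))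
  have hs2 : s ∈ Metric.ball t0 δ2 := Metric.mem_ball.2 (lt_of_lt_of_le hs (min_le_right _ _))
  have hub : (rotLift s F).translationNumber ≤ (r2.num : ℝ) / r2.den := by
    have h := CircleDeg1Lift.translationNumber_le_of_le_add_int _ (le_of_lt (hball2 hs2))
    rw [CircleDeg1Lift.translationNumber_pow] at h
    rw [le_div_iff₀ hq2]
    linarith
  have hlb : (r1.num : ℝ) / r1.den ≤ (rotLift s F).translationNumber := by
    have h := CircleDeg1Lift.le_translationNumber_of_add_int_le _ (le_of_lt (hball1 hs1))
    rw [CircleDeg1Lift.translationNumber_pow] at h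
    rw [div_le_iff₀ hq1]
    linarith
  rw [Real.dist_eq, abs_sub_lt_iff]
  rw [← Rat.cast_def] at hub hlb
  constructor <;> linarith

/-- **Diophantine rotation numbers are attained by arbitrarily small rotations of a
circle diffeomorphism with irrational rotation number.**  Let `f : S¹ → S¹` be an
orientation-preserving `C^∞` circle diffeomorphism with lift `F` and irrational
rotation number.  Then for every `ε > 0` there is `t ∈ (0, ε]` with the rotation
number of `R_{2πt} ∘ f` Diophantine; moreover for every `t ∈ (0, 1/2]` the
translation number of the lift `F + t` of `R_{2πt} ∘ f` strictly exceeds that of `F`. -/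
theorem small_rotation_gives_diophantine
    (f : ℂ → ℂ) (F : CircleDeg1Lift)
    (hmaps : Set.MapsTo f (Metric.sphere (0:ℂ) 1) (Metric.sphere (0:ℂ) 1))
    (hlift : ∀ x : ℝ,
      f (Complex.exp ((2 * Real.pi * x) * Complex.I)) =
        Complex.exp ((2 * Real.pi * F x) * Complex.I))
    (hsmooth : ContDiff ℝ (⊤ : ℕ∞) ⇑F)
    (hmono : StrictMono ⇑F)
    (hderiv : ∀ x : ℝ, 0 < deriv (⇑F) x)
    (hirr : Irrational F.translationNumber) :
    (∀ ε : ℝ, 0 < ε → ∃ t ∈ Set.Ioc (0:ℝ) ε,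
        IsDiophantine (rotLift t F).translationNumber) ∧
    (∀ t ∈ Set.Ioc (0:ℝ) (1/2 : ℝ),
        F.translationNumber < (rotLift t F).translationNumber) := by
  have hc : Continuous ⇑F := hsmooth.continuous
  have part2 : ∀ t ∈ Set.Ioc (0:ℝ) (1/2 : ℝ),
      F.translationNumber < (rotLift t F).translationNumber := by
    intro t ht
    exact transNum_rotLift_gt F hc hirr ht.1 ht.2 (exists_near_int hirr ht.1 ht.2)
  refine ⟨?_, part2⟩
  intro ε hε
  set ε' : ℝ := min ε (1/2) with hε'
  have hε'pos : 0 < ε' := lt_min hε (by norm_num)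
  have hε'le : ε' ≤ 1/2 := min_le_right _ _
  have hε'ε : ε' ≤ ε := min_le_left _ _
  have hlt : F.translationNumber < (rotLift ε' F).translationNumber :=
    part2 ε' ⟨hε'pos, hε'le⟩
  obtain ⟨β, hβ1, hβ2, hβD⟩ := exists_isDiophantine_btwn hlt
  have hIVT := intermediate_value_Ioo (le_of_lt hε'pos)
    ((cont_phi F hc).continuousOn (s := Set.Icc 0 ε'))
  have h0 : (rotLift 0 F).translationNumber = F.translationNumber := by
    rw [rotLift_zero]
  have hβmem : β ∈ Set.Ioo ((fun t : ℝ => (rotLift t F).translationNumber) 0)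
      ((fun t : ℝ => (rotLift t F).translationNumber) ε') := by
    simp only [h0]
    exact ⟨hβ1, hβ2⟩
  obtain ⟨t, htmem, htβ⟩ := hIVT hβmem
  refine ⟨t, ⟨htmem.1, le_trans (le_of_lt htmem.2) hε'ε⟩, ?_⟩
  simp only at htβ
  rw [htβ]
  exact hβD
end
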